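/- arXiv:2102.03582 — 2 statements merged into one kernel-verified Lean document; each statement's English description precedes it below -/
import Mathlib

section
/- Every vertex of the assignment polytope {x ∈ ℝ^{n×n} : ∑_l x_{rl} = 1 for all r, ∑_r x_{rl} = 1 for all l, 0 ≤ x_{rl} ≤ 1} is a 0-1 matrix (i.e., a permutation matrix). -/
theorem assignment_polytope_vertices_are_01 {n : ℕ}
    (S : Set (Matrix (Fin n) (Fin n) ℝ))
    (hS : S = {x | (∀ r l, 0 ≤ x r l ∧ x r l ≤ 1) ∧
      (∀ r, ∑ l, x r l = 1) ∧ (∀ l, ∑ r, x r l = 1)})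
    (x : Matrix (Fin n) (Fin n) ℝ) (hx : x ∈ Set.extremePoints ℝ S) :
    ∀ r l, x r l = 0 ∨ x r l = 1 := by
  have hSeq : S = (doublyStochastic ℝ (Fin n) : Set _) := by
    ext M
    rw [hS, SetLike.mem_coe, mem_doublyStochastic_iff_sum]
    constructor
    · rintro ⟨h1, h2, h3⟩
      exact ⟨fun i j => (h1 i j).1, h2, h3⟩
    · rintro ⟨h1, h2, h3⟩
      refine ⟨fun r l => ⟨h1 r l, ?_⟩, h2, h3⟩
      calc M r l ≤ ∑ l', M r l' := Finset.single_le_sum (fun i _ => h1 r i) (Finset.mem_univ l)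
        _ = 1 := h2 r
  rw [hSeq, doublyStochastic_eq_convexHull_permMatrix] at hx
  obtain ⟨σ, hσ⟩ := extremePoints_convexHull_subset hx
  intro r l
  rw [← hσ]
  by_cases h : σ r = l <;> simp [Equiv.Perm.permMatrix, PEquiv.toMatrix_apply, Equiv.toPEquiv_apply, h]
end

section
/- Every doubly stochastic n×n matrix is a convex combination of permutation matrices (Birkhoff–von Neumann theorem), hence for any linear objective c, the minimum of ⟨c, x⟩ over the assignment LP relaxation is attained at a permutation matrix; in particular the LP relaxation of the assignment problem has an integral optimal solution. -/
/-- The 0-1 permutation matrix of a permutation `σ`. -/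
def permMat {n : ℕ} (σ : Equiv.Perm (Fin n)) : Matrix (Fin n) (Fin n) ℝ :=
  fun r l => if σ r = l then 1 else 0

lemma permMat_eq_permMatrix {n : ℕ} (σ : Equiv.Perm (Fin n)) :
    permMat σ = σ.permMatrix ℝ := by
  ext r l
  simp [permMat, Equiv.Perm.permMatrix, PEquiv.toMatrix, Equiv.toPEquiv_apply]

theorem birkhoff_von_neumann_and_integral_optimum {n : ℕ}
    (x : Matrix (Fin n) (Fin n) ℝ)
    (hx_nonneg : ∀ r l, 0 ≤ x r l)
    (hx_row : ∀ r, ∑ l, x r l = 1) (hx_col : ∀ l, ∑ r, x r l = 1)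
    (c : Matrix (Fin n) (Fin n) ℝ) :
    x ∈ convexHull ℝ {P : Matrix (Fin n) (Fin n) ℝ | ∃ σ : Equiv.Perm (Fin n), P = permMat σ} ∧
    ∃ σ : Equiv.Perm (Fin n),
      ∑ r, ∑ l, c r l * permMat σ r l ≤ ∑ r, ∑ l, c r l * x r l := by
  have hset : {P : Matrix (Fin n) (Fin n) ℝ | ∃ σ : Equiv.Perm (Fin n), P = permMat σ}
      = {σ.permMatrix ℝ | σ : Equiv.Perm (Fin n)} := by
    ext P
    constructor
    · rintro ⟨σ, rfl⟩; exact ⟨σ, (permMat_eq_permMatrix σ).symm⟩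
    · rintro ⟨σ, rfl⟩; exact ⟨σ, (permMat_eq_permMatrix σ).symm⟩
  have hx : x ∈ doublyStochastic ℝ (Fin n) := by
    rw [mem_doublyStochastic_iff_sum]
    exact ⟨hx_nonneg, hx_row, hx_col⟩
  have hmem : x ∈ convexHull ℝ
      {P : Matrix (Fin n) (Fin n) ℝ | ∃ σ : Equiv.Perm (Fin n), P = permMat σ} := by
    rw [hset, ← doublyStochastic_eq_convexHull_permMatrix]
    exact hx
  refine ⟨hmem, ?_⟩
  -- choose σ₀ minimizing the objective
  obtain ⟨σ₀, -, hσ₀⟩ := Finset.exists_min_image Finset.univ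
    (fun σ : Equiv.Perm (Fin n) => ∑ r, ∑ l, c r l * permMat σ r l) ⟨1, Finset.mem_univ 1⟩
  refine ⟨σ₀, ?_⟩
  set f : Matrix (Fin n) (Fin n) ℝ →ₗ[ℝ] ℝ :=
    { toFun := fun y => ∑ r, ∑ l, c r l * y r l
      map_add' := by
        intro y z
        simp [Matrix.add_apply, mul_add, Finset.sum_add_distrib]
      map_smul' := by
        intro a y
        simp [Matrix.smul_apply, Finset.mul_sum, smul_eq_mul]
        ring_nf
        congr 1; ext r; congr 1; ext l; ring } with hf
  have hconv : Convex ℝ {y : Matrix (Fin n) (Fin n) ℝ |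
      ∑ r, ∑ l, c r l * permMat σ₀ r l ≤ f y} := by
    intro y hy z hz a b ha hb hab
    simp only [Set.mem_setOf_eq] at hy hz ⊢
    rw [map_add, map_smul, map_smul]
    calc ∑ r, ∑ l, c r l * permMat σ₀ r l
        = a * (∑ r, ∑ l, c r l * permMat σ₀ r l) + b * (∑ r, ∑ l, c r l * permMat σ₀ r l) := by
          rw [← add_mul, hab, one_mul]
      _ ≤ a * f y + b * f z :=
          add_le_add (mul_le_mul_of_nonneg_left hy ha) (mul_le_mul_of_nonneg_left hz hb)
      _ = a • f y + b • f z := by simp [smul_eq_mul]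
  have hsub : {P : Matrix (Fin n) (Fin n) ℝ | ∃ σ : Equiv.Perm (Fin n), P = permMat σ} ⊆
      {y : Matrix (Fin n) (Fin n) ℝ | ∑ r, ∑ l, c r l * permMat σ₀ r l ≤ f y} := by
    rintro P ⟨σ, rfl⟩
    exact hσ₀ σ (Finset.mem_univ σ)
  have := convexHull_min hsub hconv hmem
  exact this
end
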